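/- arXiv:1506.00369 — 3 statements merged into one kernel-verified Lean document; each statement's English description precedes it below -/
import Mathlib

section
/- Let T be a non-singular measurable transformation on X with Radon–Nikodym derivative f₀ = d(μ∘T⁻¹)/dμ, and let Φ₂ ∈ ∇' be a Young function. Then for every f in the domain of M_{Φ₂⁻¹(f₀)} in L^{Φ₁}(Σ), one has ‖C_T f‖_{Φ₂} ≤ b‖M_{Φ₂⁻¹(f₀)} f‖_{Φ₂}, where b is the ∇' constant of Φ₂. -/
open MeasureTheory Filter Topology

/-- A Young function: continuous, convex, even, vanishing exactly at 0,
with superlinear growth at infinity. -/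
structure YoungFunction where
  toFun : ℝ → ℝ
  continuous' : Continuous toFun
  convexOn' : ConvexOn ℝ Set.univ toFun
  even' : ∀ x, toFun (-x) = toFun x
  zero_iff' : ∀ x, toFun x = 0 ↔ x = 0
  tendsto_atTop' : Tendsto (fun x => toFun x / x) atTop atTop

instance : CoeFun YoungFunction fun _ => ℝ → ℝ := ⟨YoungFunction.toFun⟩

variable {X : Type*} [MeasurableSpace X]

/-- Membership in the Orlicz space `L^Φ(μ)`. -/
def MemOrlicz (Φ : YoungFunction) (μ : Measure X) (f : X → ℝ) : Prop :=
  AEStronglyMeasurable f μ ∧ ∃ k > 0, Integrable (fun x => Φ (k * f x)) μ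

/-- The Luxemburg norm on the Orlicz space `L^Φ(μ)`. -/
noncomputable def luxNorm (Φ : YoungFunction) (μ : Measure X) (f : X → ℝ) : ℝ :=
  sInf {k : ℝ | 0 < k ∧ ∫ x, Φ (f x / k) ∂μ ≤ 1}

/-- The generalized (right) inverse of a Young function on `[0,∞)`. -/
noncomputable def yInv (Φ : YoungFunction) (y : ℝ) : ℝ :=
  sSup {x : ℝ | 0 ≤ x ∧ Φ x ≤ y}

/-- `Φ` satisfies the `Δ₂` condition globally. -/
def YoungDeltaTwo (Φ : YoungFunction) : Prop :=
  ∃ k > 0, ∀ x : ℝ, 0 ≤ x → Φ (2 * x) ≤ k * Φ x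

/-- `Φ` satisfies the `Δ'` condition globally, with constant `c`. -/
def YoungDeltaPrime (Φ : YoungFunction) (c : ℝ) : Prop :=
  0 < c ∧ ∀ x y : ℝ, 0 ≤ x → 0 ≤ y → Φ (x * y) ≤ c * Φ x * Φ y

/-- `Φ` satisfies the `∇'` condition globally, with constant `b`. -/
def YoungNablaPrime (Φ : YoungFunction) (b : ℝ) : Prop :=
  0 < b ∧ ∀ x y : ℝ, 0 ≤ x → 0 ≤ y → Φ x * Φ y ≤ Φ (b * x * y)

/-- `Φ ≺ Ψ` : `Φ` is weaker than `Ψ`. -/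
def YoungWeaker (Φ Ψ : YoungFunction) : Prop :=
  ∃ a > 0, ∃ x₀ : ℝ, 0 ≤ x₀ ∧ ∀ x : ℝ, x₀ ≤ x → Φ x ≤ Ψ (a * x)

/-- `A` is an atom of the measure `μ`. -/
def IsAtomSet (μ : Measure X) (A : Set X) : Prop :=
  MeasurableSet A ∧ 0 < μ A ∧
    ∀ B : Set X, MeasurableSet B → B ⊆ A → μ B = 0 ∨ μ B = μ A

/-- `μ` is non-atomic on the set `S`. -/
def NonAtomicOn (μ : Measure X) (S : Set X) : Prop :=
  ∀ A : Set X, A ⊆ S → ¬ IsAtomSet μ A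

/-- A linear map between Orlicz spaces (given as a map on functions) is bounded. -/
def OrliczBounded (Φ₁ Φ₂ : YoungFunction) (μ : Measure X)
    (Tmap : (X → ℝ) → (X → ℝ)) : Prop :=
  ∃ C > 0, ∀ f : X → ℝ, MemOrlicz Φ₁ μ f →
    MemOrlicz Φ₂ μ (Tmap f) ∧ luxNorm Φ₂ μ (Tmap f) ≤ C * luxNorm Φ₁ μ f

/-- The atomic decomposition of a σ-finite measure space: `X = (⋃ n, A n) ∪ B`
with the `A n` pairwise disjoint atoms of finite measure and `B` non-atomic. -/
def AtomicDecomposition (μ : Measure X) (A : ℕ → Set X) (B : Set X) : Prop :=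
  (∀ n, IsAtomSet μ (A n)) ∧ (∀ n, μ (A n) < ⊤) ∧
    Pairwise (Function.onFun Disjoint A) ∧ (∀ n, Disjoint (A n) B) ∧
    MeasurableSet B ∧ NonAtomicOn μ B ∧ (⋃ n, A n) ∪ B = Set.univ

/-!
Write `g = Φ₂⁻¹(f₀) · f`. The `∇'` condition gives, pointwise,
`f₀ · Φ₂(f / (b k)) = Φ₂(Φ₂⁻¹(f₀)) · Φ₂(f / (b k)) ≤ Φ₂(g / k)`, and integrating against `μ`
turns the left side into `Φ₂(f ∘ T / (b k))` because `f₀` is the density of `μ ∘ T⁻¹`.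
So every `k` admissible in the Luxemburg norm of `g` makes `b k` admissible for `f ∘ T`.
-/

namespace YoungFunction

variable (Φ : YoungFunction)

lemma apply_zero : Φ 0 = 0 := (Φ.zero_iff' 0).mpr rfl

lemma nonneg (x : ℝ) : 0 ≤ Φ x := by
  have h := Φ.convexOn'.2 (Set.mem_univ x) (Set.mem_univ (-x))
    (by norm_num : (0 : ℝ) ≤ 1 / 2) (by norm_num : (0 : ℝ) ≤ 1 / 2) (by norm_num)
  simp only [smul_eq_mul, Φ.even' x] at h
  rw [show (1 / 2 : ℝ) * x + 1 / 2 * -x = 0 by ring, Φ.apply_zero] at h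
  linarith

lemma pos {x : ℝ} (hx : x ≠ 0) : 0 < Φ x :=
  (Φ.nonneg x).lt_of_ne fun h => hx ((Φ.zero_iff' x).mp h.symm)

lemma apply_abs (x : ℝ) : Φ |x| = Φ x := by
  rcases abs_cases x with ⟨h, _⟩ | ⟨h, _⟩ <;> simp only [h, Φ.even']

lemma apply_div_le {c : ℝ} (hc : 1 ≤ c) (t : ℝ) : Φ (t / c) ≤ Φ t / c := by
  have hc0 : 0 < c := one_pos.trans_le hc
  have h := Φ.convexOn'.2 (Set.mem_univ t) (Set.mem_univ (0 : ℝ))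
    (show (0 : ℝ) ≤ 1 / c by positivity)
    (show (0 : ℝ) ≤ 1 - 1 / c by rw [sub_nonneg]; exact div_le_one_of_le₀ hc hc0.le)
    (by ring)
  simp only [smul_eq_mul, mul_zero, add_zero, Φ.apply_zero] at h
  rwa [one_div_mul_eq_div, one_div_mul_eq_div] at h

lemma tendsto_atTop : Tendsto Φ.toFun atTop atTop := by
  refine tendsto_atTop_mono' atTop ?_ Φ.tendsto_atTop'
  filter_upwards [eventually_ge_atTop (1 : ℝ)] with x hx
  exact div_le_self (Φ.nonneg x) hx

lemma bddAbove_sublevel (y : ℝ) : BddAbove {x : ℝ | 0 ≤ x ∧ Φ x ≤ y} := by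
  obtain ⟨M, hM⟩ := eventually_atTop.mp (Φ.tendsto_atTop.eventually_gt_atTop y)
  refine ⟨M, fun x hx => ?_⟩
  by_contra! h
  exact (hM x h.le).not_ge hx.2

lemma apply_yInv {y : ℝ} (hy : 0 ≤ y) : Φ (yInv Φ y) = y := by
  have hbdd := Φ.bddAbove_sublevel y
  have hclosed : IsClosed {x : ℝ | 0 ≤ x ∧ Φ x ≤ y} :=
    (isClosed_le continuous_const continuous_id).inter
      (isClosed_le Φ.continuous' continuous_const)
  have hmem : yInv Φ y ∈ {x : ℝ | 0 ≤ x ∧ Φ x ≤ y} :=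
    hclosed.csSup_mem ⟨0, le_rfl, by rwa [Φ.apply_zero]⟩ hbdd
  refine hmem.2.antisymm (not_lt.mp fun hlt => ?_)
  -- if `Φ (yInv Φ y) < y`, continuity puts points slightly to the right of the supremum in the set
  have hnear : ∀ᶠ t in 𝓝[>] (yInv Φ y), Φ t < y :=
    eventually_nhdsWithin_of_eventually_nhds
      (Φ.continuous'.continuousAt.preimage_mem_nhds (Iio_mem_nhds hlt))
  obtain ⟨t, htΦ, hts⟩ := (hnear.and eventually_mem_nhdsWithin).exists
  exact (le_csSup hbdd ⟨hmem.1.trans hts.le, htΦ.le⟩).not_gt hts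

lemma exists_integral_div_le_one {μ : Measure X} {g : X → ℝ} {k₀ : ℝ} (hk₀ : 0 < k₀)
    (hint : Integrable (fun x => Φ (k₀ * g x)) μ) :
    ∃ k, 0 < k ∧ ∫ x, Φ (g x / k) ∂μ ≤ 1 := by
  set c := max 1 (∫ x, Φ (k₀ * g x) ∂μ)
  have hc : 1 ≤ c := le_max_left _ _
  refine ⟨c / k₀, by positivity, ?_⟩
  calc ∫ x, Φ (g x / (c / k₀)) ∂μ ≤ ∫ x, Φ (k₀ * g x) / c ∂μ := by
        refine integral_mono_of_nonneg (ae_of_all _ fun x => Φ.nonneg _) (hint.div_const c)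
          (ae_of_all _ fun x => ?_)
        simpa only [div_div_eq_mul_div, mul_comm] using Φ.apply_div_le hc (k₀ * g x)
    _ = (∫ x, Φ (k₀ * g x) ∂μ) / c := integral_div c _
    _ ≤ 1 := (div_le_one (one_pos.trans_le hc)).mpr (le_max_right _ _)

end YoungFunction

lemma luxNorm_le_mul_of_forall {Φ Ψ : YoungFunction} {μ : Measure X} {g h : X → ℝ} {c : ℝ}
    (hc : 0 < c) (hg : ∃ k, 0 < k ∧ ∫ x, Φ (g x / k) ∂μ ≤ 1)
    (H : ∀ k, 0 < k → ∫ x, Φ (g x / k) ∂μ ≤ 1 → ∫ x, Ψ (h x / (c * k)) ∂μ ≤ 1) :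
    luxNorm Ψ μ h ≤ c * luxNorm Φ μ g := by
  rw [mul_comm, ← div_le_iff₀ hc]
  refine le_csInf hg fun k ⟨hk, hk1⟩ => ?_
  rw [div_le_iff₀ hc, mul_comm]
  exact csInf_le ⟨0, fun _ hk' => hk'.1.le⟩ ⟨mul_pos hc hk, H k hk hk1⟩

lemma lintegral_comp_eq_lintegral_mul_of_map_eq_withDensity {Y : Type*} [MeasurableSpace Y]
    {μ : Measure X} {ν : Measure Y} {T : X → Y} (hT : AEMeasurable T μ) {ρ : Y → ENNReal}
    (hρ : AEMeasurable ρ ν) (hmap : μ.map T = ν.withDensity ρ) {F : Y → ENNReal}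
    (hF : AEMeasurable F ν) :
    ∫⁻ x, F (T x) ∂μ = ∫⁻ y, ρ y * F y ∂ν := by
  have hF' : AEMeasurable F (μ.map T) :=
    hmap ▸ hF.mono_ac (withDensity_absolutelyContinuous ν ρ)
  rw [← lintegral_map' hF' hT, hmap, lintegral_withDensity_eq_lintegral_mul₀ hρ hF]
  rfl

namespace YoungNablaPrime

variable {Φ : YoungFunction} {b : ℝ}

lemma mul_le (hΦ : YoungNablaPrime Φ b) (x y : ℝ) : Φ x * Φ y ≤ Φ (b * x * y) := by
  have h := hΦ.2 |x| |y| (abs_nonneg x) (abs_nonneg y)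
  rwa [Φ.apply_abs, Φ.apply_abs, ← abs_of_pos hΦ.1, ← abs_mul, ← abs_mul, Φ.apply_abs] at h

lemma mul_apply_div_le (hΦ : YoungNablaPrime Φ b) {y : ℝ} (hy : 0 ≤ y) (t : ℝ) {k : ℝ}
    (hk : 0 < k) : y * Φ (t / (b * k)) ≤ Φ (yInv Φ y * t / k) :=
  calc y * Φ (t / (b * k)) = Φ (yInv Φ y) * Φ (t / (b * k)) := by rw [Φ.apply_yInv hy]
    _ ≤ Φ (b * yInv Φ y * (t / (b * k))) := hΦ.mul_le _ _
    _ = Φ (yInv Φ y * t / k) := by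
        congr 1
        field_simp [hΦ.1.ne']

lemma integrable_comp_mul (hΦ : YoungNablaPrime Φ b) {μ : Measure X} {g : X → ℝ} {k₀ : ℝ}
    (hk₀ : k₀ ≠ 0) (hg : AEStronglyMeasurable g μ) (hint : Integrable (fun x => Φ (k₀ * g x)) μ)
    (c : ℝ) : Integrable (fun x => Φ (c * g x)) μ := by
  rcases eq_or_ne c 0 with rfl | hc
  · simp only [zero_mul, Φ.apply_zero]
    exact integrable_zero _ _ _
  set a := k₀ / (b * c)
  have ha : 0 < Φ a := Φ.pos (div_ne_zero hk₀ (mul_ne_zero hΦ.1.ne' hc))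
  refine (hint.div_const (Φ a)).mono'
    ((Φ.continuous'.comp (continuous_const_mul c)).comp_aestronglyMeasurable hg)
    (ae_of_all _ fun x => ?_)
  rw [Real.norm_of_nonneg (Φ.nonneg _), le_div_iff₀' ha]
  calc Φ a * Φ (c * g x) ≤ Φ (b * a * (c * g x)) := hΦ.mul_le a (c * g x)
    _ = Φ (k₀ * g x) := by
        congr 1
        simp only [a]
        field_simp [hΦ.1.ne']

lemma integral_comp_div_le_one (hΦ : YoungNablaPrime Φ b) {μ : Measure X} {T : X → X}
    (hT : Measurable T) {f₀ : X → ℝ} (hf₀m : Measurable f₀) (hf₀nn : ∀ x, 0 ≤ f₀ x)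
    (hmap : μ.map T = μ.withDensity fun x => ENNReal.ofReal (f₀ x))
    {f : X → ℝ} (hf : AEStronglyMeasurable f μ) {k : ℝ} (hk : 0 < k)
    (hint : Integrable (fun x => Φ (yInv Φ (f₀ x) * f x / k)) μ)
    (hle : ∫ x, Φ (yInv Φ (f₀ x) * f x / k) ∂μ ≤ 1) :
    ∫ x, Φ (f (T x) / (b * k)) ∂μ ≤ 1 := by
  have hΦf : Continuous fun t => Φ (t / (b * k)) := Φ.continuous'.comp (continuous_id.div_const _)
  have hfT : AEStronglyMeasurable (fun x => f (T x)) μ :=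
    (hf.mono_ac (hmap ▸ withDensity_absolutelyContinuous _ _)).comp_aemeasurable hT.aemeasurable
  rw [integral_eq_lintegral_of_nonneg_ae (ae_of_all _ fun _ => Φ.nonneg _)
    (hΦf.comp_aestronglyMeasurable hfT)]
  refine ENNReal.toReal_le_of_le_ofReal zero_le_one ?_
  calc ∫⁻ x, ENNReal.ofReal (Φ (f (T x) / (b * k))) ∂μ
      = ∫⁻ x, ENNReal.ofReal (f₀ x) * ENNReal.ofReal (Φ (f x / (b * k))) ∂μ :=
        lintegral_comp_eq_lintegral_mul_of_map_eq_withDensity hT.aemeasurable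
          hf₀m.ennreal_ofReal.aemeasurable hmap
          (hΦf.comp_aestronglyMeasurable hf).aemeasurable.ennreal_ofReal
    _ ≤ ∫⁻ x, ENNReal.ofReal (Φ (yInv Φ (f₀ x) * f x / k)) ∂μ := lintegral_mono fun x => by
        rw [← ENNReal.ofReal_mul (hf₀nn x)]
        exact ENNReal.ofReal_le_ofReal (hΦ.mul_apply_div_le (hf₀nn x) _ hk)
    _ = ENNReal.ofReal (∫ x, Φ (yInv Φ (f₀ x) * f x / k) ∂μ) :=
        (ofReal_integral_eq_lintegral_ofReal hint (ae_of_all _ fun _ => Φ.nonneg _)).symm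
    _ ≤ ENNReal.ofReal 1 := ENNReal.ofReal_le_ofReal hle

end YoungNablaPrime

theorem luxNorm_comp_le_general
    {X : Type*} [MeasurableSpace X] (μ : Measure X)
    (Φ₁ Φ₂ : YoungFunction) (b : ℝ) (hΦ₂ : YoungNablaPrime Φ₂ b)
    (T : X → X) (hT : Measurable T)
    (f₀ : X → ℝ) (hf₀m : Measurable f₀) (hf₀nn : ∀ x, 0 ≤ f₀ x)
    (hf₀ : ∀ S : Set X, MeasurableSet S →
      μ.map T S = ∫⁻ x in S, ENNReal.ofReal (f₀ x) ∂μ)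
    (f : X → ℝ) (hf : MemOrlicz Φ₁ μ f)
    (hfd : MemOrlicz Φ₂ μ (fun x => yInv Φ₂ (f₀ x) * f x)) :
    luxNorm Φ₂ μ (fun x => f (T x)) ≤
      b * luxNorm Φ₂ μ (fun x => yInv Φ₂ (f₀ x) * f x) := by
  have hmap : μ.map T = μ.withDensity fun x => ENNReal.ofReal (f₀ x) :=
    Measure.ext fun S hS => by rw [hf₀ S hS, withDensity_apply _ hS]
  obtain ⟨hgm, k₀, hk₀, hint⟩ := hfd
  refine luxNorm_le_mul_of_forall hΦ₂.1 (Φ₂.exists_integral_div_le_one hk₀ hint)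
    fun k hk hle => hΦ₂.integral_comp_div_le_one hT hf₀m hf₀nn hmap hf.1 hk ?_ hle
  simpa only [inv_mul_eq_div] using hΦ₂.integrable_comp_mul hk₀.ne' hgm hint k⁻¹

/-- `‖C_T f‖_{Φ₂} ≤ b ‖M_{Φ₂⁻¹(f₀)} f‖_{Φ₂}` when `Φ₂ ∈ ∇'`. -/
theorem luxNorm_comp_le
    {X : Type*} [MeasurableSpace X] (μ : Measure X)
    (Φ₁ Φ₂ : YoungFunction) (b : ℝ) (hΦ₂ : YoungNablaPrime Φ₂ b)
    (T : X → X) (hT : Measurable T) (hns : μ.map T ≪ μ)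
    (f₀ : X → ℝ) (hf₀m : Measurable f₀) (hf₀nn : ∀ x, 0 ≤ f₀ x)
    (hf₀ : ∀ S : Set X, MeasurableSet S →
      μ.map T S = ∫⁻ x in S, ENNReal.ofReal (f₀ x) ∂μ)
    (f : X → ℝ) (hf : MemOrlicz Φ₁ μ f)
    (hfd : MemOrlicz Φ₂ μ (fun x => yInv Φ₂ (f₀ x) * f x)) :
    luxNorm Φ₂ μ (fun x => f (T x)) ≤
      b * luxNorm Φ₂ μ (fun x => yInv Φ₂ (f₀ x) * f x) :=
  luxNorm_comp_le_general μ Φ₁ Φ₂ b hΦ₂ T hT f₀ hf₀m hf₀nn hf₀ f hf hfd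
end

section
/- Let 1 < p < q < ∞ and let (X, Σ, μ) be σ-finite with atomic decomposition X = (⋃ₙ Aₙ) ∪ B. The multiplication operator M_u: L^p(Σ) → L^q(Σ) is bounded if and only if (i) u = 0 μ-a.e. on B and (ii) sup_n |u(Aₙ)|^r / μ(Aₙ) < ∞, where 1/r = 1/p − 1/q. -/
open MeasureTheory Filter Topology

variable {X : Type*} [MeasurableSpace X]

/-!
Testing `M_u` on an indicator `1_E` with `|u| ≥ ε` on `E` gives `ε μ(E)^{1/q} ≤ C μ(E)^{1/p}`,
i.e. `ε ≤ C μ(E)^{1/r}`. On an atom this is `|u(Aₙ)|^r ≤ C^r μ(Aₙ)`; on the non-atomic part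
`B`, repeated halving produces sets of arbitrarily small positive measure on which `|u| ≥ ε`,
so `u = 0` a.e. on `B`.
Conversely, every measurable function is a.e. constant on an atom, so
`‖u f‖_q^q = ∑ |u(Aₙ) f(Aₙ)|^q μ(Aₙ)`, and the bound on `u(Aₙ)` together with
`∑ aₙ^{q/p} ≤ (∑ aₙ)^{q/p}` gives `‖u f‖_q ≤ M^{1/r} ‖f‖_p`.
-/

open scoped ENNReal

theorem ENNReal.tsum_rpow_le_rpow_tsum {ι : Type*} (a : ι → ℝ≥0∞) {s : ℝ} (hs : 1 ≤ s) :
    ∑' i, a i ^ s ≤ (∑' i, a i) ^ s := by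
  have hsplit : ∀ x : ℝ≥0∞, x ^ s = x * x ^ (s - 1) := fun x => by
    conv_lhs => rw [← add_sub_cancel 1 s]
    rw [ENNReal.rpow_add_of_nonneg _ _ zero_le_one (sub_nonneg.mpr hs), ENNReal.rpow_one]
  calc ∑' i, a i ^ s = ∑' i, a i * a i ^ (s - 1) := by simp only [← hsplit]
    _ ≤ ∑' i, a i * (∑' j, a j) ^ (s - 1) := by
      gcongr with i
      exact ENNReal.le_tsum i
    _ = (∑' i, a i) ^ s := by rw [ENNReal.tsum_mul_right, ← hsplit]

theorem ENNReal.mul_rpow_mul_le_of_rpow_le {a d t M : ℝ≥0∞} {p q r : ℝ} (hp : 0 < p) (hq : 0 < q)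
    (hr0 : 0 < r) (hr : 1 / r = 1 / p - 1 / q) (h : a ^ r ≤ M * t) :
    (a * d) ^ q * t ≤ M ^ (q / r) * (d ^ p * t) ^ (q / p) := by
  have hexp : q / r + 1 = q / p := by
    rw [div_eq_mul_one_div q r, hr]
    field_simp
    ring
  calc (a * d) ^ q * t = (a ^ r) ^ (q / r) * d ^ q * t := by
        rw [ENNReal.mul_rpow_of_nonneg _ _ hq.le, ← ENNReal.rpow_mul, mul_div_cancel₀ _ hr0.ne']
    _ ≤ (M * t) ^ (q / r) * d ^ q * t := by gcongr
    _ = M ^ (q / r) * (d ^ p * t) ^ (q / p) := by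
        rw [ENNReal.mul_rpow_of_nonneg _ _ (by positivity),
          ENNReal.mul_rpow_of_nonneg _ _ (by positivity), ← ENNReal.rpow_mul,
          mul_div_cancel₀ _ hp.ne', ← hexp,
          ENNReal.rpow_add_of_nonneg _ _ (by positivity) zero_le_one, ENNReal.rpow_one]
        ring

theorem rpow_le_mul_toReal_of_enorm_le {a C r : ℝ} {t : ℝ≥0∞} (hC : 0 ≤ C) (hr : 0 < r)
    (ht : t ≠ ∞) (h : ‖a‖ₑ ≤ ENNReal.ofReal C * t ^ (1 / r)) : |a| ^ r ≤ C ^ r * t.toReal := by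
  have hreal : |a| ≤ C * t.toReal ^ (1 / r) := by
    have := ENNReal.toReal_mono (by finiteness) h
    simpa [ENNReal.toReal_mul, ENNReal.toReal_rpow, hC] using this
  calc |a| ^ r ≤ (C * t.toReal ^ (1 / r)) ^ r := by gcongr
    _ = C ^ r * t.toReal := by
      rw [Real.mul_rpow hC (by positivity), ← Real.rpow_mul ENNReal.toReal_nonneg,
        one_div_mul_cancel hr.ne', Real.rpow_one]

theorem enorm_rpow_le_ofReal_mul_of_rpow_le {a M r : ℝ} {t : ℝ≥0∞} (hr : 0 ≤ r) (ht : t ≠ ∞)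
    (h : |a| ^ r ≤ M * t.toReal) : ‖a‖ₑ ^ r ≤ ENNReal.ofReal M * t := by
  rw [Real.enorm_eq_ofReal_abs, ENNReal.ofReal_rpow_of_nonneg (abs_nonneg a) hr,
    ← ENNReal.ofReal_toReal ht, ← ENNReal.ofReal_mul' ENNReal.toReal_nonneg]
  exact ENNReal.ofReal_le_ofReal h

section

variable {μ : Measure X}

namespace IsAtomSet

variable {A : Set X}

theorem restrict_eq_zero_or_compl_eq_zero (hA : IsAtomSet μ A) (hfin : μ A ≠ ∞) {s : Set X}
    (hs : MeasurableSet s) : μ.restrict A s = 0 ∨ μ.restrict A sᶜ = 0 := by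
  rw [Measure.restrict_apply hs, Measure.restrict_apply hs.compl]
  refine (hA.2.2 _ (hs.inter hA.1) Set.inter_subset_right).imp id fun hfull => ?_
  rw [Set.inter_comm, ← Set.sdiff_eq, ← Set.sdiff_inter_self_eq_sdiff, measure_sdiff
    Set.inter_subset_right (hs.inter hA.1).nullMeasurableSet (hfull ▸ hfin), hfull, tsub_self]

theorem exists_ae_eq_const (hA : IsAtomSet μ A) (hfin : μ A ≠ ∞) {Y : Type*}
    [MeasurableSpace Y] [Nonempty Y] [MeasurableSpace.CountablySeparated Y] {g : X → Y}
    (hg : AEMeasurable g (μ.restrict A)) : ∃ c, g =ᵐ[μ.restrict A] fun _ => c := by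
  obtain ⟨c, hc⟩ : ∃ c, hg.mk g =ᵐ[μ.restrict A] fun _ => c :=
    exists_eventuallyEq_const_of_forall_separating MeasurableSet fun U hU =>
      (hA.restrict_eq_zero_or_compl_eq_zero hfin (hg.measurable_mk hU)).symm.imp
        mem_ae_iff.mpr measure_eq_zero_iff_ae_notMem.mp
  exact ⟨c, hg.ae_eq_mk.trans hc⟩

end IsAtomSet

theorem exists_subset_measure_le_half_of_not_isAtomSet {E : Set X} (hE : MeasurableSet E)
    (h0 : μ E ≠ 0) (hfin : μ E ≠ ∞) (hna : ¬ IsAtomSet μ E) :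
    ∃ F ⊆ E, MeasurableSet F ∧ μ F ≠ 0 ∧ μ F ≤ μ E / 2 := by
  obtain ⟨F, hF, hFE, hF0, hFne⟩ : ∃ F, MeasurableSet F ∧ F ⊆ E ∧ μ F ≠ 0 ∧ μ F ≠ μ E := by
    simpa [IsAtomSet, hE, pos_iff_ne_zero.mpr h0] using hna
  have hdiff : μ (E \ F) = μ E - μ F :=
    measure_sdiff hFE hF.nullMeasurableSet (ne_top_of_le_ne_top hfin (measure_mono hFE))
  rcases le_or_gt (μ F) (μ E / 2) with hsmall | hlarge
  · exact ⟨F, hFE, hF, hF0, hsmall⟩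
  · refine ⟨E \ F, Set.sdiff_subset, hE.diff hF, ?_, ?_⟩
    · rw [hdiff]
      exact (tsub_pos_of_lt ((measure_mono hFE).lt_of_ne hFne)).ne'
    · calc μ (E \ F) = μ E - μ F := hdiff
        _ ≤ μ E - μ E / 2 := tsub_le_tsub_left hlarge.le _
        _ = μ E / 2 := ENNReal.sub_half hfin

theorem NonAtomicOn.exists_seq_tendsto_zero {S : Set X} (hna : NonAtomicOn μ S)
    (hS : MeasurableSet S) (h0 : μ S ≠ 0) (hfin : μ S ≠ ∞) :
    ∃ E : ℕ → Set X, (∀ n, E n ⊆ S ∧ MeasurableSet (E n) ∧ μ (E n) ≠ 0) ∧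
      Tendsto (fun n => μ (E n)) atTop (𝓝 0) := by
  have halving : ∀ n : ℕ, ∃ E ⊆ S, MeasurableSet E ∧ μ E ≠ 0 ∧ μ E ≤ μ S * 2⁻¹ ^ n := by
    intro n
    induction n with
    | zero => exact ⟨S, subset_rfl, hS, h0, by simp⟩
    | succ n ih =>
      obtain ⟨E, hES, hE, hE0, hEle⟩ := ih
      obtain ⟨F, hFE, hF, hF0, hFle⟩ := exists_subset_measure_le_half_of_not_isAtomSet hE hE0
        (ne_top_of_le_ne_top hfin (measure_mono hES)) (hna E hES)
      refine ⟨F, hFE.trans hES, hF, hF0, hFle.trans ?_⟩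
      rw [pow_succ, ← mul_assoc, ← div_eq_mul_inv]
      exact ENNReal.div_le_div_right hEle 2
  choose E hE using halving
  refine ⟨E, fun n => ⟨(hE n).1, (hE n).2.1, (hE n).2.2.1⟩, ?_⟩
  have hbound : Tendsto (fun n : ℕ => μ S * 2⁻¹ ^ n) atTop (𝓝 0) := by
    simpa using ENNReal.Tendsto.const_mul
      (ENNReal.tendsto_pow_atTop_nhds_zero_of_lt_one (by norm_num)) (Or.inr hfin)
  exact tendsto_of_tendsto_of_tendsto_of_le_of_le tendsto_const_nhds hbound
    (fun _ => zero_le) fun n => (hE n).2.2.2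

def MulBoundedBy (μ : Measure X) (p q : ℝ≥0∞) (u : X → ℝ) (C : ℝ≥0∞) : Prop :=
  ∀ f : X → ℝ, MemLp f p μ →
    MemLp (fun x => u x * f x) q μ ∧ eLpNorm (fun x => u x * f x) q μ ≤ C * eLpNorm f p μ

theorem MulBoundedBy.le_mul_measure_rpow {p q r : ℝ} {u : X → ℝ} {C : ℝ≥0∞}
    (hb : MulBoundedBy μ (.ofReal p) (.ofReal q) u C) (hp : 0 < p) (hq : 0 < q)
    (hr : 1 / r = 1 / p - 1 / q) {E : Set X} (hE : MeasurableSet E) (h0 : μ E ≠ 0)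
    (hfin : μ E ≠ ∞) {ε : ℝ≥0∞} (hε : ∀ᵐ x ∂μ.restrict E, ε ≤ ‖u x‖ₑ) :
    ε ≤ C * μ E ^ (1 / r) := by
  have hlower : ε * μ E ^ (1 / q) ≤
      eLpNorm (fun x => u x * E.indicator (fun _ => (1 : ℝ)) x) (.ofReal q) μ := by
    have hind : eLpNorm (E.indicator fun _ => ε) (.ofReal q) μ = ε * μ E ^ (1 / q) := by
      rw [eLpNorm_indicator_const hE (by simpa using hq) ENNReal.ofReal_ne_top, enorm_eq_self,
        ENNReal.toReal_ofReal hq.le]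
    rw [← hind]
    refine eLpNorm_mono_enorm_ae ?_
    filter_upwards [(ae_restrict_iff' hE).mp hε] with x hx
    by_cases hxE : x ∈ E <;> simp [hxE, hx]
  have hupper := (hb _ (memLp_indicator_const _ hE (1 : ℝ) (Or.inr hfin))).2
  rw [eLpNorm_indicator_const hE (by simpa using hp) ENNReal.ofReal_ne_top,
    ENNReal.toReal_ofReal hp.le, enorm_one, one_mul] at hupper
  have hsplit : μ E ^ (1 / p) = μ E ^ (1 / r) * μ E ^ (1 / q) := by
    rw [← ENNReal.rpow_add _ _ h0 hfin, hr, sub_add_cancel]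
  rw [← ENNReal.mul_le_mul_iff_left (c := μ E ^ (1 / q))
    (ENNReal.rpow_pos (pos_iff_ne_zero.mpr h0) hfin).ne'
    (ENNReal.rpow_ne_top_of_nonneg (by positivity) hfin), mul_assoc, ← hsplit]
  exact hlower.trans hupper

theorem exists_subset_le_enorm_of_not_ae_eq_zero [SigmaFinite μ] {u : X → ℝ} (hu : Measurable u)
    {B : Set X} (hB : MeasurableSet B) (h : ¬ ∀ᵐ x ∂μ.restrict B, u x = 0) :
    ∃ ε : ℝ≥0∞, ε ≠ 0 ∧ ∃ S ⊆ B, MeasurableSet S ∧ μ S ≠ 0 ∧ μ S ≠ ∞ ∧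
      ∀ x ∈ S, ε ≤ ‖u x‖ₑ := by
  set T : ℕ → Set X := fun n => {x | (n : ℝ≥0∞)⁻¹ < ‖u x‖ₑ} ∩ B
  have hT : ∀ n, MeasurableSet (T n) := fun n =>
    (measurableSet_lt measurable_const hu.enorm).inter hB
  have hcover : {x | ¬ u x = 0} ∩ B ⊆ ⋃ n, T n := fun x ⟨hx, hxB⟩ =>
    let ⟨n, hn⟩ := ENNReal.exists_inv_nat_lt (enorm_ne_zero.mpr hx)
    Set.mem_iUnion.mpr ⟨n, hn, hxB⟩
  obtain ⟨n, hn⟩ : ∃ n, μ (T n) ≠ 0 := by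
    by_contra! hnull
    exact h (ae_iff.mpr <| (Measure.restrict_apply' hB).trans <|
      measure_mono_null hcover (measure_iUnion_null hnull))
  obtain ⟨S, hS, hST, hS0, hSfin⟩ :=
    Measure.exists_subset_measure_lt_top (hT n) (pos_iff_ne_zero.mpr hn)
  exact ⟨(n : ℝ≥0∞)⁻¹, ENNReal.inv_ne_zero.mpr (ENNReal.natCast_ne_top n), S,
    fun x hx => (hST hx).2, hS, hS0.ne', hSfin.ne, fun x hx => (hST hx).1.le⟩

theorem MulBoundedBy.ae_restrict_eq_zero [SigmaFinite μ] {p q r : ℝ} {u : X → ℝ} {C : ℝ≥0∞}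
    (hb : MulBoundedBy μ (.ofReal p) (.ofReal q) u C) (hp : 0 < p) (hq : 0 < q) (hr0 : 0 < r)
    (hr : 1 / r = 1 / p - 1 / q) (hC : C ≠ ∞) (hu : Measurable u) {B : Set X}
    (hB : MeasurableSet B) (hna : NonAtomicOn μ B) : ∀ᵐ x ∂μ.restrict B, u x = 0 := by
  by_contra h
  obtain ⟨ε, hε, S, hSB, hS, hS0, hSfin, hεS⟩ := exists_subset_le_enorm_of_not_ae_eq_zero hu hB h
  obtain ⟨E, hE, hlim⟩ :=
    NonAtomicOn.exists_seq_tendsto_zero (fun A hA => hna A (hA.trans hSB)) hS hS0 hSfin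
  have hle : ∀ n, ε ≤ C * μ (E n) ^ (1 / r) := fun n =>
    hb.le_mul_measure_rpow hp hq hr (hE n).2.1 (hE n).2.2
      (ne_top_of_le_ne_top hSfin (measure_mono (hE n).1))
      (ae_restrict_of_forall_mem (hE n).2.1 fun x hx => hεS x ((hE n).1 hx))
  have hlim' : Tendsto (fun n => C * μ (E n) ^ (1 / r)) atTop (𝓝 0) := by
    have := ENNReal.Tendsto.const_mul
      (((ENNReal.continuous_rpow_const (y := 1 / r)).tendsto 0).comp hlim) (Or.inr hC)
    rwa [ENNReal.zero_rpow_of_pos (one_div_pos.mpr hr0), mul_zero] at this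
  exact hε (le_antisymm (ge_of_tendsto' hlim' hle) zero_le)

theorem lintegral_iUnion_eq_tsum_of_ae_eq_const {A : ℕ → Set X} (hA : ∀ n, MeasurableSet (A n))
    (hd : Pairwise (Function.onFun Disjoint A)) {g : X → ℝ≥0∞} {c : ℕ → ℝ≥0∞}
    (hc : ∀ n, g =ᵐ[μ.restrict (A n)] fun _ => c n) :
    ∫⁻ x in ⋃ n, A n, g x ∂μ = ∑' n, c n * μ (A n) := by
  rw [lintegral_iUnion hA hd]
  exact tsum_congr fun n => by rw [lintegral_congr_ae (hc n), setLIntegral_const]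

namespace AtomicDecomposition

variable {A : ℕ → Set X} {B : Set X}

theorem compl_eq (hdec : AtomicDecomposition μ A B) : Bᶜ = ⋃ n, A n := by
  obtain ⟨-, -, -, hAB, -, -, hcover⟩ := hdec
  exact (IsCompl.eq_compl ⟨Set.disjoint_iUnion_left.mpr hAB, codisjoint_iff.mpr hcover⟩).symm

theorem lintegral_mul_rpow_le (hdec : AtomicDecomposition μ A B) {p q r : ℝ} (hp : 0 < p)
    (hpq : p ≤ q) (hr0 : 0 < r) (hr : 1 / r = 1 / p - 1 / q) {u : X → ℝ}
    (hB0 : ∀ᵐ x ∂μ.restrict B, u x = 0) {cu : ℕ → ℝ}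
    (hcu : ∀ n, ∀ᵐ x ∂μ.restrict (A n), u x = cu n) {M : ℝ≥0∞}
    (hM : ∀ n, ‖cu n‖ₑ ^ r ≤ M * μ (A n)) {f : X → ℝ} (hf : AEStronglyMeasurable f μ) :
    ∫⁻ x, ‖u x * f x‖ₑ ^ q ∂μ ≤ M ^ (q / r) * (∫⁻ x, ‖f x‖ₑ ^ p ∂μ) ^ (q / p) := by
  have hcompl := hdec.compl_eq
  obtain ⟨hatom, hfin, hdisj, -, hB, -, -⟩ := hdec
  have hq : 0 < q := hp.trans_le hpq
  choose d hd using fun n => (hatom n).exists_ae_eq_const (hfin n).ne hf.aemeasurable.restrict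
  have hB_null : ∫⁻ x in B, ‖u x * f x‖ₑ ^ q ∂μ = 0 := by
    refine (lintegral_congr_ae ?_).trans lintegral_zero
    filter_upwards [hB0] with x hx
    simp [hx, hq]
  have hmul : ∫⁻ x, ‖u x * f x‖ₑ ^ q ∂μ = ∑' n, (‖cu n‖ₑ * ‖d n‖ₑ) ^ q * μ (A n) := by
    rw [← lintegral_add_compl _ hB, hB_null, zero_add, hcompl,
      lintegral_iUnion_eq_tsum_of_ae_eq_const (fun n => (hatom n).1) hdisj]
    intro n
    filter_upwards [hcu n, hd n] with x hux hfx
    simp [hux, hfx, enorm_mul]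
  have hf_ge : ∑' n, ‖d n‖ₑ ^ p * μ (A n) ≤ ∫⁻ x, ‖f x‖ₑ ^ p ∂μ := by
    rw [← lintegral_iUnion_eq_tsum_of_ae_eq_const (fun n => (hatom n).1) hdisj]
    · exact setLIntegral_le_lintegral _ _
    · intro n
      filter_upwards [hd n] with x hfx
      simp [hfx]
  calc ∫⁻ x, ‖u x * f x‖ₑ ^ q ∂μ
      ≤ ∑' n, M ^ (q / r) * (‖d n‖ₑ ^ p * μ (A n)) ^ (q / p) := by
        rw [hmul]
        exact ENNReal.tsum_le_tsum fun n => ENNReal.mul_rpow_mul_le_of_rpow_le hp hq hr0 hr (hM n)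
    _ = M ^ (q / r) * ∑' n, (‖d n‖ₑ ^ p * μ (A n)) ^ (q / p) := ENNReal.tsum_mul_left
    _ ≤ M ^ (q / r) * (∫⁻ x, ‖f x‖ₑ ^ p ∂μ) ^ (q / p) := by
        gcongr
        exact (ENNReal.tsum_rpow_le_rpow_tsum _ ((one_le_div hp).mpr hpq)).trans
          (by gcongr)

theorem eLpNorm_mul_le (hdec : AtomicDecomposition μ A B) {p q r : ℝ} (hp : 0 < p)
    (hpq : p ≤ q) (hr0 : 0 < r) (hr : 1 / r = 1 / p - 1 / q) {u : X → ℝ}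
    (hB0 : ∀ᵐ x ∂μ.restrict B, u x = 0) {cu : ℕ → ℝ}
    (hcu : ∀ n, ∀ᵐ x ∂μ.restrict (A n), u x = cu n) {M : ℝ≥0∞}
    (hM : ∀ n, ‖cu n‖ₑ ^ r ≤ M * μ (A n)) {f : X → ℝ} (hf : AEStronglyMeasurable f μ) :
    eLpNorm (fun x => u x * f x) (.ofReal q) μ ≤ M ^ (1 / r) * eLpNorm f (.ofReal p) μ := by
  have hq : 0 < q := hp.trans_le hpq
  rw [eLpNorm_eq_lintegral_rpow_enorm_toReal (by simpa using hq) ENNReal.ofReal_ne_top,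
    eLpNorm_eq_lintegral_rpow_enorm_toReal (by simpa using hp) ENNReal.ofReal_ne_top,
    ENNReal.toReal_ofReal hq.le, ENNReal.toReal_ofReal hp.le]
  calc (∫⁻ x, ‖u x * f x‖ₑ ^ q ∂μ) ^ (1 / q)
      ≤ (M ^ (q / r) * (∫⁻ x, ‖f x‖ₑ ^ p ∂μ) ^ (q / p)) ^ (1 / q) := by
        gcongr
        exact hdec.lintegral_mul_rpow_le hp hpq hr0 hr hB0 hcu hM hf
    _ = M ^ (1 / r) * (∫⁻ x, ‖f x‖ₑ ^ p ∂μ) ^ (1 / p) := by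
        rw [ENNReal.mul_rpow_of_nonneg _ _ (by positivity), ← ENNReal.rpow_mul,
          ← ENNReal.rpow_mul]
        congr 2 <;> field_simp

end AtomicDecomposition

end

/-- boundedness of `M_u : L^p → L^q` for `1 < p < q < ∞`. -/
theorem multiplication_Lp_bounded_iff
    {X : Type*} [MeasurableSpace X] (μ : Measure X) [SigmaFinite μ]
    (A : ℕ → Set X) (B : Set X) (hdec : AtomicDecomposition μ A B)
    (p q r : ℝ) (hp : 1 < p) (hpq : p < q)
    (hr : 1 / r = 1 / p - 1 / q)
    (u : X → ℝ) (hum : Measurable u)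
    (cu : ℕ → ℝ) (hcu : ∀ n, ∀ᵐ x ∂μ.restrict (A n), u x = cu n) :
    (∃ C : ℝ, 0 ≤ C ∧ ∀ f : X → ℝ, MemLp f (ENNReal.ofReal p) μ →
        MemLp (fun x => u x * f x) (ENNReal.ofReal q) μ ∧
          eLpNorm (fun x => u x * f x) (ENNReal.ofReal q) μ ≤
            ENNReal.ofReal C * eLpNorm f (ENNReal.ofReal p) μ) ↔
      ((∀ᵐ x ∂μ.restrict B, u x = 0) ∧
        ∃ M : ℝ, ∀ n, |cu n| ^ r ≤ M * (μ (A n)).toReal) := by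
  have hp0 : 0 < p := zero_lt_one.trans hp
  have hq0 : 0 < q := hp0.trans hpq
  have hr0 : 0 < r := one_div_pos.mp (hr ▸ sub_pos.mpr (one_div_lt_one_div_of_lt hp0 hpq))
  obtain ⟨hatom, hfin, -, -, hB, hna, -⟩ := id hdec
  constructor
  · rintro ⟨C, hC, hb⟩
    refine ⟨MulBoundedBy.ae_restrict_eq_zero hb hp0 hq0 hr0 hr ENNReal.ofReal_ne_top hum hB hna,
      C ^ r, fun n => rpow_le_mul_toReal_of_enorm_le hC hr0 (hfin n).ne ?_⟩
    refine MulBoundedBy.le_mul_measure_rpow hb hp0 hq0 hr (hatom n).1 (hatom n).2.1.ne'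
      (hfin n).ne ?_
    filter_upwards [hcu n] with x hx
    rw [hx]
  · rintro ⟨hB0, M, hM⟩
    have hM0 : 0 ≤ M :=
      nonneg_of_mul_nonneg_left ((Real.rpow_nonneg (abs_nonneg (cu 0)) r).trans (hM 0))
        (ENNReal.toReal_pos (hatom 0).2.1.ne' (hfin 0).ne)
    refine ⟨M ^ (1 / r), by positivity, fun f hf => ?_⟩
    have hbound := hdec.eLpNorm_mul_le hp0 hpq.le hr0 hr hB0 hcu
      (fun n => enorm_rpow_le_ofReal_mul_of_rpow_le hr0.le (hfin n).ne (hM n)) hf.1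
    rw [← ENNReal.ofReal_rpow_of_nonneg hM0 (by positivity)]
    exact ⟨⟨hum.aestronglyMeasurable.mul hf.1, hbound.trans_lt (by finiteness)⟩, hbound⟩
end

section
/- Let 1 < q < p < ∞ and let T be a non-singular measurable transformation with Radon–Nikodym derivative f₀ = d(μ∘T⁻¹)/dμ, inducing C_T: L^p(Σ) → L^q(Σ). Then C_T is bounded from L^p into L^q if and only if f₀ ∈ L^{r/q}(Σ), where 1/r = 1/q − 1/p; moreover this is equivalent to the existence of a countable measurable partition {Fⱼ} of X with Σⱼ Q_T(Fⱼ)^{r/q} μ(Fⱼ) < ∞, where Q_T(F) = ess sup_{x∈F} f₀(x). -/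
open MeasureTheory Filter Topology ENNReal

variable {X : Type*} [MeasurableSpace X]

/-- `Q_T(F) = ess sup_{x ∈ F} f₀(x)` (as an extended nonnegative real). -/
noncomputable def QTess {X : Type*} [MeasurableSpace X] (μ : Measure X)
    (f₀ : X → ℝ) (F : Set X) : ℝ≥0∞ :=
  essSup (fun x => ENNReal.ofReal (f₀ x)) (μ.restrict F)

/-!
The change of variables `∫ |f ∘ T|^q dμ = ∫ f₀ |f|^q dμ` and Hölder's inequality for the
conjugate exponents `r/q` and `p/q` give `‖C_T f‖_q ≤ ‖f₀‖_{r/q}^{1/q} ‖f‖_p`. Conversely, for a set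
`A` of finite measure on which `f₀` is bounded, the test function `f = 𝟙_A f₀^{(r/q - 1)/q}` has
`‖f‖_p^p = ‖C_T f‖_q^q = ∫_A f₀^{r/q}`, so a bound `‖C_T f‖_q ≤ C ‖f‖_p` gives
`∫_A f₀^{r/q} ≤ C^r`; by σ-finiteness such sets exhaust `X`.
For the partition condition, `∫_F f₀^{r/q} ≤ Q_T(F)^{r/q} μ(F)` on every piece `F`, and on the
dyadic level sets `{2^k ≤ f₀ < 2^(k+1)}`, together with `{f₀ = 0}`, this is reversed up to the
factor `2^{r/q}`.
-/

open Set

lemma enorm_indicator_toReal_rpow {α : Type*} {A : Set α} {g : α → ℝ≥0∞} (hg : ∀ y, g y ≠ ⊤)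
    {a : ℝ} (ha : 0 < a) (y : α) :
    ‖A.indicator (fun y => (g y).toReal) y‖ₑ ^ a = A.indicator (fun y => g y ^ a) y := by
  by_cases hy : y ∈ A
  · simp [hy, Real.enorm_of_nonneg, ENNReal.ofReal_toReal (hg y)]
  · simp [hy, ENNReal.zero_rpow_of_pos ha]

lemma pos_of_one_div_eq_one_div_sub {p q r : ℝ} (hq : 0 < q) (hqp : q < p)
    (hr : 1 / r = 1 / q - 1 / p) : 0 < r :=
  one_div_pos.1 (hr ▸ sub_pos.2 (one_div_lt_one_div_of_lt hq hqp))

lemma Real.holderConjugate_div_div {p q r : ℝ} (hq : 0 < q) (hqp : q < p)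
    (hr : 1 / r = 1 / q - 1 / p) : (r / q).HolderConjugate (p / q) := by
  have hp : 0 < p := hq.trans hqp
  have hinv : (r / q)⁻¹ = 1 - q / p := by
    rw [inv_div, div_eq_mul_one_div q r, hr]
    field_simp
  have hinv_pos : 0 < (r / q)⁻¹ := by
    rw [hinv, sub_pos, div_lt_one hp]
    exact hqp
  refine Real.holderConjugate_iff.2 ⟨?_, ?_⟩
  · have h := (one_lt_inv₀ hinv_pos).2 (by rw [hinv]; linarith [div_pos hq hp])
    rwa [inv_inv] at h
  · rw [hinv, inv_div]
    ring

lemma ENNReal.le_rpow_of_rpow_le_mul_rpow {J C : ℝ≥0∞} {p q r : ℝ} (hp : 0 < p) (hr : 0 < r)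
    (hqrp : 1 / q = 1 / r + 1 / p) (hJ : J ≠ ⊤) (h : J ^ (1 / q) ≤ C * J ^ (1 / p)) :
    J ≤ C ^ r := by
  rcases eq_or_ne J 0 with rfl | hJ0
  · exact zero_le
  have hJp : J ^ (1 / p) ≠ 0 := (ENNReal.rpow_pos (pos_iff_ne_zero.2 hJ0) hJ).ne'
  have hJp' : J ^ (1 / p) ≠ ⊤ := ENNReal.rpow_ne_top_of_nonneg (by positivity) hJ
  rw [hqrp, ENNReal.rpow_add _ _ hJ0 hJ, ENNReal.mul_le_mul_iff_left hJp hJp', one_div] at h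
  exact (ENNReal.rpow_inv_le_iff hr).1 h

lemma eLpNorm_ofReal_eq_lintegral {E : Type*} [NormedAddCommGroup E] {μ : Measure X}
    {f : X → E} {a : ℝ} (ha : 0 < a) :
    eLpNorm f (ENNReal.ofReal a) μ = (∫⁻ x, ‖f x‖ₑ ^ a ∂μ) ^ (1 / a) := by
  rw [eLpNorm_eq_lintegral_rpow_enorm_toReal (by simpa using ha) ENNReal.ofReal_ne_top,
    ENNReal.toReal_ofReal ha.le]

lemma memLp_ofReal_iff_lintegral_rpow_lt_top {μ : Measure X} {f : X → ℝ}
    (hf : AEStronglyMeasurable f μ) (hf_nonneg : ∀ x, 0 ≤ f x) {a : ℝ} (ha : 0 < a) :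
    MemLp f (ENNReal.ofReal a) μ ↔ ∫⁻ x, ENNReal.ofReal (f x) ^ a ∂μ < ⊤ := by
  rw [MemLp, and_iff_right hf, eLpNorm_lt_top_iff_lintegral_rpow_enorm_lt_top
    (by simpa using ha) ENNReal.ofReal_ne_top, ENNReal.toReal_ofReal ha.le]
  simp only [Real.enorm_of_nonneg (hf_nonneg _)]

section CompositionOperator

variable {Y : Type*} [MeasurableSpace Y]

def CompositionBoundedLp (μ : Measure X) (ν : Measure Y) (T : X → Y) (p q : ℝ) : Prop :=
  ∃ C : ℝ, 0 ≤ C ∧ ∀ f : Y → ℝ, MemLp f (ENNReal.ofReal p) ν →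
    MemLp (fun x => f (T x)) (ENNReal.ofReal q) μ ∧
      eLpNorm (fun x => f (T x)) (ENNReal.ofReal q) μ ≤
        ENNReal.ofReal C * eLpNorm f (ENNReal.ofReal p) ν

variable {μ : Measure X} {ν : Measure Y} {T : X → Y} {e : Y → ℝ≥0∞}

lemma quasiMeasurePreserving_of_map_eq_withDensity (hT : Measurable T)
    (hmap : μ.map T = ν.withDensity e) : Measure.QuasiMeasurePreserving T μ ν :=
  ⟨hT, hmap ▸ withDensity_absolutelyContinuous ν e⟩

lemma lintegral_comp_eq_lintegral_mul (hT : Measurable T) (he : Measurable e)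
    (hmap : μ.map T = ν.withDensity e) {g : Y → ℝ≥0∞} (hg : AEMeasurable g ν) :
    ∫⁻ x, g (T x) ∂μ = ∫⁻ y, e y * g y ∂ν := by
  rw [← lintegral_map' (hmap ▸ hg.mono_ac (withDensity_absolutelyContinuous ν e))
    hT.aemeasurable, hmap, lintegral_withDensity_eq_lintegral_mul₀ he.aemeasurable hg]
  rfl

variable {p q r : ℝ}

lemma eLpNorm_comp_le (hT : Measurable T) (he : Measurable e)
    (hmap : μ.map T = ν.withDensity e) (hq : 0 < q) (hqp : q < p) (hr : 1 / r = 1 / q - 1 / p)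
    {f : Y → ℝ} (hf : AEStronglyMeasurable f ν) :
    eLpNorm (fun x => f (T x)) (ENNReal.ofReal q) μ ≤
      (∫⁻ y, e y ^ (r / q) ∂ν) ^ (1 / r) * eLpNorm f (ENNReal.ofReal p) ν := by
  have hp : 0 < p := hq.trans hqp
  have hfq : AEMeasurable (fun y => ‖f y‖ₑ ^ q) ν := hf.enorm.pow_const q
  have holder : ∫⁻ x, ‖f (T x)‖ₑ ^ q ∂μ ≤
      (∫⁻ y, e y ^ (r / q) ∂ν) ^ (1 / (r / q)) * (∫⁻ y, ‖f y‖ₑ ^ p ∂ν) ^ (1 / (p / q)) := by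
    calc ∫⁻ x, ‖f (T x)‖ₑ ^ q ∂μ = ∫⁻ y, e y * ‖f y‖ₑ ^ q ∂ν :=
          lintegral_comp_eq_lintegral_mul hT he hmap hfq
      _ ≤ (∫⁻ y, e y ^ (r / q) ∂ν) ^ (1 / (r / q)) *
            (∫⁻ y, (‖f y‖ₑ ^ q) ^ (p / q) ∂ν) ^ (1 / (p / q)) :=
          ENNReal.lintegral_mul_le_Lp_mul_Lq ν (Real.holderConjugate_div_div hq hqp hr)
            he.aemeasurable hfq
      _ = _ := by simp_rw [← ENNReal.rpow_mul, mul_div_cancel₀ p hq.ne']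
  rw [eLpNorm_ofReal_eq_lintegral hq, eLpNorm_ofReal_eq_lintegral hp]
  calc (∫⁻ x, ‖f (T x)‖ₑ ^ q ∂μ) ^ (1 / q)
      ≤ ((∫⁻ y, e y ^ (r / q) ∂ν) ^ (1 / (r / q)) *
          (∫⁻ y, ‖f y‖ₑ ^ p ∂ν) ^ (1 / (p / q))) ^ (1 / q) :=
        ENNReal.rpow_le_rpow holder (by positivity)
    _ = _ := by
        rw [ENNReal.mul_rpow_of_nonneg _ _ (by positivity), ← ENNReal.rpow_mul,
          ← ENNReal.rpow_mul]
        field_simp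

lemma compositionBoundedLp_of_lintegral_rpow_lt_top (hT : Measurable T) (he : Measurable e)
    (hmap : μ.map T = ν.withDensity e) (hq : 0 < q) (hqp : q < p)
    (hr : 1 / r = 1 / q - 1 / p) (hI : ∫⁻ y, e y ^ (r / q) ∂ν < ⊤) :
    CompositionBoundedLp μ ν T p q := by
  have hIr : (∫⁻ y, e y ^ (r / q) ∂ν) ^ (1 / r) ≠ ⊤ := by
    have hr0 := pos_of_one_div_eq_one_div_sub hq hqp hr
    exact ENNReal.rpow_ne_top_of_nonneg (by positivity) hI.ne
  refine ⟨((∫⁻ y, e y ^ (r / q) ∂ν) ^ (1 / r)).toReal, ENNReal.toReal_nonneg, fun f hf => ?_⟩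
  have hle := eLpNorm_comp_le hT he hmap hq hqp hr hf.1
  rw [ENNReal.ofReal_toReal hIr]
  have hqmp := quasiMeasurePreserving_of_map_eq_withDensity hT hmap
  exact ⟨⟨hf.1.comp_quasiMeasurePreserving hqmp, hle.trans_lt (ENNReal.mul_lt_top hIr.lt_top hf.2)⟩,
    hle⟩

lemma setLIntegral_rpow_le_of_eLpNorm_comp_le (hT : Measurable T) (he : Measurable e)
    (he_ne_top : ∀ y, e y ≠ ⊤) (hmap : μ.map T = ν.withDensity e) (hq : 0 < q) (hqp : q < p)
    (hr : 1 / r = 1 / q - 1 / p) {C : ℝ}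
    (hC : ∀ f : Y → ℝ, MemLp f (ENNReal.ofReal p) ν →
      eLpNorm (fun x => f (T x)) (ENNReal.ofReal q) μ ≤
        ENNReal.ofReal C * eLpNorm f (ENNReal.ofReal p) ν)
    {A : Set Y} (hA : MeasurableSet A) (hA_fin : ∫⁻ y in A, e y ^ (r / q) ∂ν ≠ ⊤) :
    ∫⁻ y in A, e y ^ (r / q) ∂ν ≤ ENNReal.ofReal C ^ r := by
  have hp : 0 < p := hq.trans hqp
  have hr0 : 0 < r := pos_of_one_div_eq_one_div_sub hq hqp hr
  set s := r / q with hs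
  have hs1 : 0 < s - 1 := (Real.holderConjugate_div_div hq hqp hr).sub_one_pos
  have hexp : (s - 1) / q * p = s := by
    rw [hs]; field_simp at hr ⊢; linarith
  set F : Y → ℝ := A.indicator fun y => (e y ^ ((s - 1) / q)).toReal
  have hFm : Measurable F := ((he.pow_const _).ennreal_toReal).indicator hA
  have hFe : ∀ a, 0 < a → ∀ y,
      ‖F y‖ₑ ^ a = A.indicator (fun y => e y ^ ((s - 1) / q * a)) y := by
    intro a ha y
    refine (enorm_indicator_toReal_rpow
      (fun y => ENNReal.rpow_ne_top_of_nonneg (by positivity) (he_ne_top y)) ha y).trans ?_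
    simp_rw [← ENNReal.rpow_mul]
  have hFp : ∫⁻ y, ‖F y‖ₑ ^ p ∂ν = ∫⁻ y in A, e y ^ s ∂ν := by
    simp_rw [hFe p hp, hexp, lintegral_indicator hA]
  have hFTq : ∫⁻ x, ‖F (T x)‖ₑ ^ q ∂μ = ∫⁻ y in A, e y ^ s ∂ν := by
    rw [lintegral_comp_eq_lintegral_mul hT he hmap (hFm.enorm.pow_const q).aemeasurable,
      ← lintegral_indicator hA]
    refine lintegral_congr fun y => ?_
    rw [hFe q hq, div_mul_cancel₀ _ hq.ne']
    by_cases hy : y ∈ A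
    · simp only [indicator_of_mem hy]
      conv_rhs => rw [← add_sub_cancel (1 : ℝ) s]
      rw [ENNReal.rpow_add_of_nonneg _ _ zero_le_one hs1.le, ENNReal.rpow_one]
    · simp [hy]
  have hFmem : MemLp F (ENNReal.ofReal p) ν := by
    refine ⟨?_, ?_⟩
    · exact hFm.aestronglyMeasurable
    · rw [eLpNorm_ofReal_eq_lintegral hp, hFp]
      exact ENNReal.rpow_lt_top_of_nonneg (by positivity) hA_fin
  have hbound := hC F hFmem
  rw [eLpNorm_ofReal_eq_lintegral hq, eLpNorm_ofReal_eq_lintegral hp, hFp] at hbound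
  rw [hFTq] at hbound
  exact ENNReal.le_rpow_of_rpow_le_mul_rpow hp hr0 (by rw [hr]; ring) hA_fin hbound

lemma lintegral_rpow_le_of_eLpNorm_comp_le [SigmaFinite ν] (hT : Measurable T)
    (he : Measurable e) (he_ne_top : ∀ y, e y ≠ ⊤) (hmap : μ.map T = ν.withDensity e)
    (hq : 0 < q) (hqp : q < p) (hr : 1 / r = 1 / q - 1 / p) {C : ℝ}
    (hC : ∀ f : Y → ℝ, MemLp f (ENNReal.ofReal p) ν →
      eLpNorm (fun x => f (T x)) (ENNReal.ofReal q) μ ≤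
        ENNReal.ofReal C * eLpNorm f (ENNReal.ofReal p) ν) :
    ∫⁻ y, e y ^ (r / q) ∂ν ≤ ENNReal.ofReal C ^ r := by
  have hs : 0 ≤ r / q := (Real.holderConjugate_div_div hq hqp hr).nonneg
  have hB_mono : Monotone fun n : ℕ => {y | e y ≤ n} :=
    fun m n hmn y (hy : e y ≤ m) => hy.trans (Nat.cast_le.2 hmn)
  set A : ℕ → Set Y := fun n => spanningSets ν n ∩ {y | e y ≤ n}
  have hA : ∀ n, MeasurableSet (A n) :=
    fun n => (measurableSet_spanningSets ν n).inter (measurableSet_le he measurable_const)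
  have hA_mono : Monotone A := (monotone_spanningSets ν).inter hB_mono
  have hA_univ : ⋃ n, A n = univ := by
    rw [iUnion_inter_of_monotone (monotone_spanningSets ν) hB_mono, iUnion_spanningSets,
      univ_inter, iUnion_eq_univ_iff]
    exact fun y => (ENNReal.exists_nat_gt (he_ne_top y)).imp fun n hn => hn.le
  have hA_fin : ∀ n, ∫⁻ y in A n, e y ^ (r / q) ∂ν ≠ ⊤ := by
    intro n
    refine ne_of_lt ?_
    calc ∫⁻ y in A n, e y ^ (r / q) ∂ν ≤ ∫⁻ _ in A n, (n : ℝ≥0∞) ^ (r / q) ∂ν :=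
          setLIntegral_mono measurable_const fun y hy => ENNReal.rpow_le_rpow hy.2 hs
      _ = (n : ℝ≥0∞) ^ (r / q) * ν (A n) := setLIntegral_const _ _
      _ < ⊤ := ENNReal.mul_lt_top
          (ENNReal.rpow_lt_top_of_nonneg hs (ENNReal.natCast_ne_top n))
          ((measure_mono inter_subset_left).trans_lt (measure_spanningSets_lt_top ν n))
  rw [← setLIntegral_univ, ← hA_univ, setLIntegral_iUnion_of_directed _ hA_mono.directed_le]
  exact iSup_le fun n =>
    setLIntegral_rpow_le_of_eLpNorm_comp_le hT he he_ne_top hmap hq hqp hr hC (hA n)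
      (hA_fin n)

lemma lintegral_rpow_lt_top_of_compositionBoundedLp [SigmaFinite ν] (hT : Measurable T)
    (he : Measurable e) (he_ne_top : ∀ y, e y ≠ ⊤) (hmap : μ.map T = ν.withDensity e)
    (hq : 0 < q) (hqp : q < p) (hr : 1 / r = 1 / q - 1 / p)
    (hbdd : CompositionBoundedLp μ ν T p q) : ∫⁻ y, e y ^ (r / q) ∂ν < ⊤ := by
  obtain ⟨C, -, hC⟩ := hbdd
  have hr0 := pos_of_one_div_eq_one_div_sub hq hqp hr
  exact (lintegral_rpow_le_of_eLpNorm_comp_le hT he he_ne_top hmap hq hqp hr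
    fun f hf => (hC f hf).2).trans_lt
      (ENNReal.rpow_lt_top_of_nonneg hr0.le ENNReal.ofReal_ne_top)

end CompositionOperator

lemma measurable_intLog (b : ℕ) : Measurable (Int.log b : ℝ → ℤ) := by
  unfold Int.log
  exact Measurable.ite measurableSet_Ici
    ((Measurable.of_discrete (f := fun n : ℕ => (Nat.log b n : ℤ))).comp Nat.measurable_floor)
    ((Measurable.of_discrete (f := fun n : ℕ => -(Nat.clog b n : ℤ))).comp
      (Nat.measurable_ceil.comp measurable_inv))

noncomputable def dyadicIndex (a : ℝ) : ℕ :=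
  if a = 0 then 0 else Encodable.encode (Int.log 2 a) + 1

lemma measurable_dyadicIndex : Measurable dyadicIndex :=
  Measurable.ite (measurableSet_singleton 0) measurable_const
    ((Measurable.of_discrete.comp (measurable_intLog 2)).add_const 1)

lemma le_two_mul_of_dyadicIndex_eq {a b : ℝ} (ha : 0 ≤ a) (h : dyadicIndex a = dyadicIndex b) :
    b ≤ 2 * a := by
  unfold dyadicIndex at h
  by_cases hb : b = 0
  · rw [hb]; positivity
  rcases ha.eq_or_lt with rfl | ha
  · simp [hb] at h
  have hlog : Int.log 2 a = Int.log 2 b := by simpa [ha.ne', hb] using h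
  apply le_of_lt
  calc b < (2 : ℝ) ^ (Int.log 2 b + 1) := by
        exact_mod_cast Int.lt_zpow_succ_log_self one_lt_two b
    _ = 2 * (2 : ℝ) ^ Int.log 2 a := by rw [hlog, zpow_add_one₀ two_ne_zero, mul_comm]
    _ ≤ 2 * a := by
        gcongr
        exact_mod_cast Int.zpow_log_le_self one_lt_two ha

section Partition

variable {μ : Measure X} {f₀ : X → ℝ} {s : ℝ}

lemma setLIntegral_rpow_le_QTess_rpow_mul (hs : 0 ≤ s) (F : Set X) :
    ∫⁻ x in F, ENNReal.ofReal (f₀ x) ^ s ∂μ ≤ QTess μ f₀ F ^ s * μ F :=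
  calc ∫⁻ x in F, ENNReal.ofReal (f₀ x) ^ s ∂μ ≤ ∫⁻ _ in F, QTess μ f₀ F ^ s ∂μ :=
        lintegral_mono_ae <| (ENNReal.ae_le_essSup _).mono fun _ hx => ENNReal.rpow_le_rpow hx hs
    _ = QTess μ f₀ F ^ s * μ F := setLIntegral_const _ _

lemma QTess_rpow_mul_le (hs : 0 ≤ s) {c : ℝ} (hc : 0 ≤ c) {F : Set X} (hF : MeasurableSet F)
    (hosc : ∀ x ∈ F, ∀ y ∈ F, f₀ y ≤ c * f₀ x) :
    QTess μ f₀ F ^ s * μ F ≤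
      ENNReal.ofReal c ^ s * ∫⁻ x in F, ENNReal.ofReal (f₀ x) ^ s ∂μ := by
  have hQ : ∀ x ∈ F, QTess μ f₀ F ≤ ENNReal.ofReal c * ENNReal.ofReal (f₀ x) := fun x hx => by
    rw [← ENNReal.ofReal_mul hc]
    exact essSup_le_of_ae_le _ <| ae_restrict_of_forall_mem hF fun y hy =>
      ENNReal.ofReal_le_ofReal (hosc x hx y hy)
  calc QTess μ f₀ F ^ s * μ F = ∫⁻ _ in F, QTess μ f₀ F ^ s ∂μ :=
        (setLIntegral_const _ _).symm
    _ ≤ ∫⁻ x in F, ENNReal.ofReal c ^ s * ENNReal.ofReal (f₀ x) ^ s ∂μ :=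
        lintegral_mono_ae <| ae_restrict_of_forall_mem hF fun x hx => by
          rw [← ENNReal.mul_rpow_of_nonneg _ _ hs]
          exact ENNReal.rpow_le_rpow (hQ x hx) hs
    _ = ENNReal.ofReal c ^ s * ∫⁻ x in F, ENNReal.ofReal (f₀ x) ^ s ∂μ :=
        lintegral_const_mul' _ _ (ENNReal.rpow_ne_top_of_nonneg hs ENNReal.ofReal_ne_top)

lemma lintegral_rpow_lt_top_of_tsum_QTess_rpow_lt_top {ι : Type*} [Countable ι] (hs : 0 ≤ s)
    {F : ι → Set X} (hF : ∀ j, MeasurableSet (F j))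
    (hdisj : Pairwise (Function.onFun Disjoint F))
    (hcover : ⋃ j, F j = univ) (hsum : ∑' j, QTess μ f₀ (F j) ^ s * μ (F j) < ⊤) :
    ∫⁻ x, ENNReal.ofReal (f₀ x) ^ s ∂μ < ⊤ := by
  rw [← setLIntegral_univ, ← hcover, lintegral_iUnion hF hdisj]
  exact (ENNReal.tsum_le_tsum fun j => setLIntegral_rpow_le_QTess_rpow_mul hs (F j)).trans_lt hsum

lemma exists_partition_tsum_QTess_rpow_lt_top (hf₀m : Measurable f₀) (hf₀nn : ∀ x, 0 ≤ f₀ x)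
    (hs : 0 ≤ s) (hI : ∫⁻ x, ENNReal.ofReal (f₀ x) ^ s ∂μ < ⊤) :
    ∃ F : ℕ → Set X, (∀ j, MeasurableSet (F j)) ∧ Pairwise (Function.onFun Disjoint F) ∧
      ⋃ j, F j = univ ∧ ∑' j, QTess μ f₀ (F j) ^ s * μ (F j) < ⊤ := by
  set F : ℕ → Set X := fun j => (fun x => dyadicIndex (f₀ x)) ⁻¹' {j}
  have hF : ∀ j, MeasurableSet (F j) :=
    fun j => (measurable_dyadicIndex.comp hf₀m) (measurableSet_singleton j)
  have hdisj : Pairwise (Function.onFun Disjoint F) := pairwise_disjoint_fiber _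
  have hcover : ⋃ j, F j = univ := iUnion_eq_univ_iff.2 fun x => ⟨_, rfl⟩
  refine ⟨F, hF, hdisj, hcover, ?_⟩
  calc ∑' j, QTess μ f₀ (F j) ^ s * μ (F j)
      ≤ ∑' j, ENNReal.ofReal 2 ^ s * ∫⁻ x in F j, ENNReal.ofReal (f₀ x) ^ s ∂μ :=
        ENNReal.tsum_le_tsum fun j => QTess_rpow_mul_le hs zero_le_two (hF j)
          fun x hx y hy => le_two_mul_of_dyadicIndex_eq (hf₀nn x) (hx.trans hy.symm)
    _ = ENNReal.ofReal 2 ^ s * ∫⁻ x, ENNReal.ofReal (f₀ x) ^ s ∂μ := by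
        rw [ENNReal.tsum_mul_left, ← lintegral_iUnion hF hdisj, hcover, setLIntegral_univ]
    _ < ⊤ := ENNReal.mul_lt_top (ENNReal.rpow_lt_top_of_nonneg hs ENNReal.ofReal_ne_top) hI

end Partition

theorem composition_Lp_bounded_iff_general
    {X : Type*} [MeasurableSpace X] (μ : Measure X) [SigmaFinite μ]
    (p q r : ℝ) (hq : 1 < q) (hqp : q < p)
    (hr : 1 / r = 1 / q - 1 / p)
    (T : X → X) (hT : Measurable T)
    (f₀ : X → ℝ) (hf₀m : Measurable f₀) (hf₀nn : ∀ x, 0 ≤ f₀ x)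
    (hf₀ : ∀ S : Set X, MeasurableSet S →
      μ.map T S = ∫⁻ x in S, ENNReal.ofReal (f₀ x) ∂μ) :
    ((∃ C : ℝ, 0 ≤ C ∧ ∀ f : X → ℝ, MemLp f (ENNReal.ofReal p) μ →
        MemLp (fun x => f (T x)) (ENNReal.ofReal q) μ ∧
          eLpNorm (fun x => f (T x)) (ENNReal.ofReal q) μ ≤
            ENNReal.ofReal C * eLpNorm f (ENNReal.ofReal p) μ) ↔
      MemLp f₀ (ENNReal.ofReal (r / q)) μ) ∧
    (MemLp f₀ (ENNReal.ofReal (r / q)) μ ↔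
      ∃ F : ℕ → Set X, (∀ j, MeasurableSet (F j)) ∧
        Pairwise (Function.onFun Disjoint F) ∧ (⋃ j, F j) = Set.univ ∧
        ∑' j, QTess μ f₀ (F j) ^ (r / q) * μ (F j) < ⊤) := by
  have hq0 : 0 < q := zero_lt_one.trans hq
  have hs : 0 < r / q := (Real.holderConjugate_div_div hq0 hqp hr).pos
  have he : Measurable fun x => ENNReal.ofReal (f₀ x) := hf₀m.ennreal_ofReal
  have hmap : μ.map T = μ.withDensity fun x => ENNReal.ofReal (f₀ x) :=
    Measure.ext fun S hS => by rw [hf₀ S hS, withDensity_apply _ hS]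
  have hmem :=
    memLp_ofReal_iff_lintegral_rpow_lt_top (μ := μ) hf₀m.aestronglyMeasurable hf₀nn hs
  refine ⟨⟨fun hbdd => hmem.2 ?_, fun h => ?_⟩,
    ⟨fun h => ?_, fun ⟨F, hF, hdisj, hcover, hsum⟩ => ?_⟩⟩
  · exact lintegral_rpow_lt_top_of_compositionBoundedLp hT he (fun _ => ENNReal.ofReal_ne_top)
      hmap hq0 hqp hr hbdd
  · exact compositionBoundedLp_of_lintegral_rpow_lt_top hT he hmap hq0 hqp hr (hmem.1 h)
  · exact exists_partition_tsum_QTess_rpow_lt_top hf₀m hf₀nn hs.le (hmem.1 h)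
  · exact hmem.2 (lintegral_rpow_lt_top_of_tsum_QTess_rpow_lt_top hs.le hF hdisj hcover hsum)

/-- boundedness of `C_T : L^p → L^q` for `1 < q < p < ∞`:
equivalent to `f₀ ∈ L^{r/q}` and to a partition summability condition. -/
theorem composition_Lp_bounded_iff
    {X : Type*} [MeasurableSpace X] (μ : Measure X) [SigmaFinite μ]
    (p q r : ℝ) (hq : 1 < q) (hqp : q < p)
    (hr : 1 / r = 1 / q - 1 / p)
    (T : X → X) (hT : Measurable T) (hns : μ.map T ≪ μ)
    (f₀ : X → ℝ) (hf₀m : Measurable f₀) (hf₀nn : ∀ x, 0 ≤ f₀ x)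
    (hf₀ : ∀ S : Set X, MeasurableSet S →
      μ.map T S = ∫⁻ x in S, ENNReal.ofReal (f₀ x) ∂μ) :
    ((∃ C : ℝ, 0 ≤ C ∧ ∀ f : X → ℝ, MemLp f (ENNReal.ofReal p) μ →
        MemLp (fun x => f (T x)) (ENNReal.ofReal q) μ ∧
          eLpNorm (fun x => f (T x)) (ENNReal.ofReal q) μ ≤
            ENNReal.ofReal C * eLpNorm f (ENNReal.ofReal p) μ) ↔
      MemLp f₀ (ENNReal.ofReal (r / q)) μ) ∧
    (MemLp f₀ (ENNReal.ofReal (r / q)) μ ↔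
      ∃ F : ℕ → Set X, (∀ j, MeasurableSet (F j)) ∧
        Pairwise (Function.onFun Disjoint F) ∧ (⋃ j, F j) = Set.univ ∧
        ∑' j, QTess μ f₀ (F j) ^ (r / q) * μ (F j) < ⊤) :=
  composition_Lp_bounded_iff_general μ p q r hq hqp hr T hT f₀ hf₀m hf₀nn hf₀
end
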